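/- arXiv:2307.08680 — 6 statements merged into one kernel-verified Lean document; each statement's English description precedes it below -/
import Mathlib

section
/- Let n ≥ 2 and 2 ≤ r ≤ n − 1. If G is a simple graph on n vertices in which every vertex has degree at most r, then the 𝔽₂-rank of the augmented adjacency matrix of G satisfies rank_{𝔽₂}(Ā(G)) ≥ ⌊n/(r+1)⌋. -/
open Classical in
/-- The augmented adjacency matrix of a simple graph on `Fin n` over `𝔽₂ = ZMod 2`. -/
noncomputable def augAdj {n : ℕ} (G : SimpleGraph (Fin n)) :
    Matrix (Fin n) (Fin n) (ZMod 2) :=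
  fun u v => if u = v ∨ G.Adj u v then 1 else 0

/-!
Choose a set `S` of `rank Ā(G)` linearly independent columns spanning the column space. Since
`Ā(G)` has a nonzero diagonal, every coordinate is nonzero on some column, hence on some column
of `S`; so the supports of the columns in `S` cover all `n` vertices. A column of `Ā(G)` is
supported on a closed neighbourhood, of size at most `r + 1`, so `n ≤ rank Ā(G) · (r + 1)`.
-/

open Finset Submodule

theorem Submodule.exists_mem_apply_ne_zero_of_mem_span {ι R : Type*} [Semiring R]
    {s : Set (ι → R)} {v : ι → R} (hv : v ∈ span R s) {i : ι} (hvi : v i ≠ 0) :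
    ∃ w ∈ s, w i ≠ 0 := by
  by_contra! h
  have : span R s ≤ LinearMap.ker (LinearMap.proj i) :=
    span_le.2 fun w hw => by simpa using h w hw
  exact hvi (this hv)

namespace Matrix

variable {m n K : Type*} [Fintype n] [Field K]

theorem exists_finset_card_eq_rank_forall_col_mem_span (A : Matrix m n K) :
    ∃ s : Finset n, #s = A.rank ∧ ∀ j, A.col j ∈ span K (A.col '' s) := by
  classical
  obtain ⟨b, -, -, hcols, hli⟩ :=
    exists_linearIndepOn_extension (linearIndepOn_empty K A.col) (Set.subset_univ _)
  have hspan : span K (A.col '' b) = span K (Set.range A.col) :=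
    le_antisymm (span_mono (Set.image_subset_range _ _))
      (span_le.2 (by simpa only [Set.image_univ] using hcols))
  refine ⟨b.toFinset, ?_, fun j => ?_⟩
  · rw [rank_eq_finrank_span_cols, ← hspan, Set.image_eq_range, finrank_span_eq_card hli,
      Set.toFinset_card]
  · simpa only [Set.coe_toFinset, SetLike.mem_coe] using hcols ⟨j, Set.mem_univ j, rfl⟩

theorem card_le_rank_mul_of_card_col_support_le [Fintype m] [DecidableEq m] [DecidableEq K]
    (A : Matrix m n K) {k : ℕ} (hrow : ∀ i, ∃ j, A i j ≠ 0)
    (hcol : ∀ j, #{i | A i j ≠ 0} ≤ k) :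
    Fintype.card m ≤ A.rank * k := by
  obtain ⟨s, hs, hspan⟩ := A.exists_finset_card_eq_rank_forall_col_mem_span
  have hcover : univ ⊆ s.biUnion fun j => {i | A i j ≠ 0} := by
    intro i _
    obtain ⟨j, hij⟩ := hrow i
    obtain ⟨_, ⟨j', hj', rfl⟩, hij'⟩ := exists_mem_apply_ne_zero_of_mem_span (hspan j) hij
    exact mem_biUnion.2 ⟨j', hj', by simpa using hij'⟩
  calc Fintype.card m = #(univ : Finset m) := card_univ.symm
    _ ≤ #(s.biUnion fun j => {i | A i j ≠ 0}) := card_le_card hcover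
    _ ≤ #s * k := card_biUnion_le_card_mul _ _ _ fun j _ => hcol j
    _ = A.rank * k := by rw [hs]

end Matrix

theorem augAdj_apply_self {n : ℕ} (G : SimpleGraph (Fin n)) (v : Fin n) : augAdj G v v = 1 := by
  simp [augAdj]

theorem card_augAdj_col_support_le {n : ℕ} (G : SimpleGraph (Fin n)) [DecidableRel G.Adj]
    (j : Fin n) : #{i | augAdj G i j ≠ 0} ≤ G.degree j + 1 := by
  have hsub : ({i | augAdj G i j ≠ 0} : Finset (Fin n)) ⊆ insert j (G.neighborFinset j) := by
    intro i hi
    by_cases hij : i = j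
    · simp [hij]
    · have hadj : G.Adj i j := by simpa [augAdj, hij] using hi
      simp [hadj.symm]
  calc #{i | augAdj G i j ≠ 0} ≤ #(insert j (G.neighborFinset j)) := card_le_card hsub
    _ ≤ G.degree j + 1 := by
      rw [← G.card_neighborFinset_eq_degree]
      exact card_insert_le _ _

theorem rank_augAdj_ge_of_degree_le_general {n r : ℕ} (G : SimpleGraph (Fin n)) [DecidableRel G.Adj]
    (hdeg : ∀ v, G.degree v ≤ r) :
    n / (r + 1) ≤ (augAdj G).rank := by
  have hcount := (augAdj G).card_le_rank_mul_of_card_col_support_le (k := r + 1)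
    (fun i => ⟨i, by simp [augAdj_apply_self]⟩)
    (fun j => (card_augAdj_col_support_le G j).trans (Nat.succ_le_succ (hdeg j)))
  rw [Fintype.card_fin] at hcount
  exact Nat.div_le_of_le_mul (by rwa [mul_comm])

/-- If every vertex of `G` has degree at most `r`, then the `𝔽₂`-rank of the
augmented adjacency matrix is at least `⌊n / (r + 1)⌋`. -/
theorem rank_augAdj_ge_of_degree_le {n r : ℕ} (hn : 2 ≤ n) (hr : 2 ≤ r)
    (hrn : r ≤ n - 1) (G : SimpleGraph (Fin n)) [DecidableRel G.Adj]
    (hdeg : ∀ v, G.degree v ≤ r) :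
    n / (r + 1) ≤ (augAdj G).rank :=
  rank_augAdj_ge_of_degree_le_general G hdeg
end

section
/- Let A be a symmetric n×n matrix over 𝔽₂ with all diagonal entries equal to 1, such that every row of A has at most r+1 nonzero entries. Then rank_{𝔽₂}(A) ≥ ⌊n/(r+1)⌋. -/
/-!
Choose rows of `A` forming a basis of its row space; there are `rank A` of them. Every row lies
in their span, so its support lies in the union of their supports, and row `i` has `i` in its
support because `A i i ≠ 0`. Hence these `rank A` supports, each of size at most `r + 1`, cover
all `n` indices, giving `n ≤ (r + 1) · rank A`.
-/

open Finset Module Submodule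

theorem Submodule.support_subset_of_mem_span {ι R : Type*} [Semiring R] {s : Set (ι → R)}
    {v : ι → R} (hv : v ∈ span R s) :
    Function.support v ⊆ ⋃ u ∈ s, Function.support u := by
  induction hv using Submodule.span_induction with
  | mem u hu => exact Set.subset_biUnion_of_mem hu
  | zero => simp
  | add u u' _ _ hu hu' => exact (Function.support_add u u').trans (Set.union_subset hu hu')
  | smul c u _ hu => exact (Function.support_const_smul_subset c u).trans hu

theorem exists_finset_subset_span_eq_card_eq_finrank (K : Type*) {V : Type*} [DivisionRing K]
    [AddCommGroup V] [Module K V] {t : Set V} (ht : t.Finite) :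
    ∃ s : Finset V, ↑s ⊆ t ∧ span K (s : Set V) = span K t ∧
      #s = finrank K (span K t) := by
  obtain ⟨b, hbt, hspan, hind⟩ := exists_linearIndependent K t
  obtain ⟨s, rfl⟩ := (ht.subset hbt).exists_finset_coe
  exact ⟨s, hbt, hspan, by rw [← hspan, finrank_span_finset_eq_card hind]⟩

theorem card_le_card_mul_of_forall_exists_mem_span_ne_zero {ι R : Type*} [Fintype ι]
    [DecidableEq ι] [Semiring R] [DecidableEq R] {s : Finset (ι → R)} {w : ℕ}
    (hweight : ∀ u ∈ s, #{j | u j ≠ 0} ≤ w)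
    (hcover : ∀ i, ∃ v ∈ span R (s : Set (ι → R)), v i ≠ 0) :
    Fintype.card ι ≤ #s * w := by
  have huniv : (univ : Finset ι) ⊆ s.biUnion fun u => {j | u j ≠ 0} := by
    intro i _
    obtain ⟨v, hv, hvi⟩ := hcover i
    obtain ⟨u, hu, hui⟩ := Set.mem_iUnion₂.1 (support_subset_of_mem_span hv hvi)
    exact mem_biUnion.2 ⟨u, hu, by simpa using hui⟩
  exact (card_le_card huniv).trans (card_biUnion_le_card_mul _ _ _ hweight)

theorem Matrix.card_le_rank_mul_of_diag_ne_zero {m K : Type*} [Fintype m] [DecidableEq m]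
    [Field K] [DecidableEq K] (A : Matrix m m K) {w : ℕ} (hdiag : ∀ i, A i i ≠ 0)
    (hrow : ∀ i, #{j | A i j ≠ 0} ≤ w) : Fintype.card m ≤ A.rank * w := by
  obtain ⟨s, hsrows, hspan, hcard⟩ :=
    exists_finset_subset_span_eq_card_eq_finrank K (Set.finite_range A.row)
  rw [rank_eq_finrank_span_row, ← hcard]
  refine card_le_card_mul_of_forall_exists_mem_span_ne_zero (fun u hu => ?_) fun i => ?_
  · obtain ⟨k, rfl⟩ := hsrows hu
    exact hrow k
  · exact ⟨A i, hspan ▸ subset_span ⟨i, rfl⟩, hdiag i⟩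

theorem rank_ge_of_symm_unit_diag_row_weight_general {n r : ℕ}
    (A : Matrix (Fin n) (Fin n) (ZMod 2))
    (hdiag : ∀ i, A i i = 1)
    (hrow : ∀ i, (Finset.univ.filter fun j => A i j ≠ 0).card ≤ r + 1) :
    n / (r + 1) ≤ A.rank := by
  have hn : n ≤ A.rank * (r + 1) := by
    simpa using A.card_le_rank_mul_of_diag_ne_zero (fun i => by simp [hdiag i]) hrow
  exact Nat.div_le_of_le_mul (by rwa [mul_comm] at hn)

/-- A symmetric binary `n × n` matrix with all diagonal entries `1` in which every row
has at most `r + 1` nonzero entries has `𝔽₂`-rank at least `⌊n / (r + 1)⌋`. -/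
theorem rank_ge_of_symm_unit_diag_row_weight {n r : ℕ}
    (A : Matrix (Fin n) (Fin n) (ZMod 2))
    (hsymm : A.IsSymm)
    (hdiag : ∀ i, A i i = 1)
    (hrow : ∀ i, (Finset.univ.filter fun j => A i j ≠ 0).card ≤ r + 1) :
    n / (r + 1) ≤ A.rank :=
  rank_ge_of_symm_unit_diag_row_weight_general A hdiag hrow
end

section
/- For every n ≥ 2 and every 2 ≤ r ≤ n − 1 there exists a simple graph G on n vertices with no isolated vertices, in which every vertex has degree at most r, such that rank_{𝔽₂}(Ā(G)) = ⌈n/(r+1)⌉; consequently the binary storage code of G with parity repair has rate 1 − (1/n)·⌈n/(r+1)⌉. -/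
open Finset

section ClusterGraph

variable {V α : Type*}

def clusterGraph (f : V → α) : SimpleGraph V :=
  SimpleGraph.fromRel fun u v => f u = f v

theorem clusterGraph_adj {f : V → α} {u v : V} :
    (clusterGraph f).Adj u v ↔ u ≠ v ∧ f u = f v := by
  simp only [clusterGraph, SimpleGraph.fromRel_adj, eq_comm (a := f v), or_self]

theorem clusterGraph_neighborFinset [Fintype V] [DecidableEq V] [DecidableEq α] (f : V → α)
    (v : V) [Fintype ((clusterGraph f).neighborSet v)] :
    (clusterGraph f).neighborFinset v = ({u | f u = f v} : Finset V).erase v := by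
  ext u
  simp [clusterGraph_adj, ne_comm, eq_comm (a := f v)]

theorem clusterGraph_degree [Fintype V] [DecidableEq V] [DecidableEq α] (f : V → α)
    (v : V) [Fintype ((clusterGraph f).neighborSet v)] :
    (clusterGraph f).degree v = #{u | f u = f v} - 1 := by
  rw [← SimpleGraph.card_neighborFinset_eq_degree, clusterGraph_neighborFinset,
    card_erase_of_mem (by simp)]

theorem augAdj_clusterGraph {n : ℕ} [DecidableEq α] (f : Fin n → α) :
    augAdj (clusterGraph f) = Matrix.of fun u v => if f u = f v then 1 else 0 := by
  ext u v
  by_cases h : u = v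
  · simp [augAdj, h]
  · simp [augAdj, clusterGraph_adj, h]

end ClusterGraph

theorem rank_of_ite_eq_of_surjective {m α K : Type*} [Fintype m] [Fintype α] [DecidableEq α]
    [Field K] {f : m → α} (hf : Function.Surjective f) :
    (Matrix.of fun u v => if f u = f v then (1 : K) else 0).rank = Fintype.card α := by
  set g : α → m → K := fun a u => if f u = a then 1 else 0
  obtain ⟨s, hs⟩ := hf.hasRightInverse
  have hg : LinearIndependent K g := by
    refine LinearIndependent.of_comp (LinearMap.funLeft K K s) ?_
    convert (Pi.basisFun K α).linearIndependent using 1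
    ext a b
    simp [g, hs b, Pi.single_apply, eq_comm]
  have hcols : Set.range (Matrix.of fun u v => if f u = f v then (1 : K) else 0).col =
      Set.range g := by
    rw [← hf.range_comp g]
    rfl
  rw [Matrix.rank_eq_finrank_span_cols, hcols, finrank_span_eq_card hg]

section Residues

variable {n k : ℕ} [NeZero k]

theorem surjective_finOfNat (hkn : k ≤ n) :
    Function.Surjective fun u : Fin n => Fin.ofNat k u :=
  fun j => ⟨⟨j, j.2.trans_le hkn⟩, Fin.ext (by simp)⟩

theorem rank_augAdj_clusterGraph_finOfNat (hkn : k ≤ n) :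
    (augAdj (clusterGraph fun u : Fin n => Fin.ofNat k u)).rank = k := by
  rw [augAdj_clusterGraph, rank_of_ite_eq_of_surjective (surjective_finOfNat hkn),
    Fintype.card_fin]

theorem degree_clusterGraph_finOfNat_pos (h : 2 * k ≤ n) (v : Fin n)
    [Fintype ((clusterGraph fun u : Fin n => Fin.ofNat k u).neighborSet v)] :
    0 < (clusterGraph fun u : Fin n => Fin.ofNat k u).degree v := by
  have hlt : (v : ℕ) % k < k := Nat.mod_lt _ (Nat.pos_of_neZero k)
  have hfiber : 1 < #{u : Fin n | Fin.ofNat k u = Fin.ofNat k v} := by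
    refine one_lt_card.2 ⟨⟨v % k, by omega⟩, ?_, ⟨v % k + k, by omega⟩, ?_, ?_⟩ <;>
      simp [Fin.ext_iff, NeZero.ne k]
  rw [clusterGraph_degree]
  omega

theorem degree_clusterGraph_finOfNat_le {m : ℕ} (h : n ≤ k * (m + 1)) (v : Fin n)
    [Fintype ((clusterGraph fun u : Fin n => Fin.ofNat k u).neighborSet v)] :
    (clusterGraph fun u : Fin n => Fin.ofNat k u).degree v ≤ m := by
  have hfiber : #{u : Fin n | Fin.ofNat k u = Fin.ofNat k v} ≤ #(range (m + 1)) := by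
    refine card_le_card_of_injOn (fun u => u / k) (fun u _ => ?_) fun u hu w hw huw => ?_
    · simpa using Nat.div_lt_of_lt_mul (u.2.trans_le h)
    · simp only [coe_filter, mem_univ, true_and, Set.mem_ofPred_eq, Fin.ext_iff,
        Fin.val_ofNat] at hu hw
      rw [Fin.ext_iff, ← Nat.div_add_mod u k, ← Nat.div_add_mod w k, show u / k = w / k from huw,
        hu, hw]
  rw [card_range] at hfiber
  rw [clusterGraph_degree]
  omega

end Residues

theorem le_add_div_succ_mul (n r : ℕ) : n ≤ (n + r) / (r + 1) * (r + 1) := by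
  have := Nat.lt_div_mul_add (a := n + r) (b := r + 1) (by omega)
  omega

theorem two_mul_add_div_succ_le {n r : ℕ} (hn : 2 ≤ n) (hr : 2 ≤ r) :
    2 * ((n + r) / (r + 1)) ≤ n := by
  have hle := Nat.div_mul_le_self (n + r) (r + 1)
  rcases Nat.lt_or_ge ((n + r) / (r + 1)) 2 with hk | hk
  · omega
  · nlinarith

open Classical in
theorem exists_graph_rank_augAdj_eq_ceil_general {n r : ℕ} (hn : 2 ≤ n) (hr : 2 ≤ r) :
    ∃ G : SimpleGraph (Fin n),
      (∀ v, 0 < G.degree v) ∧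
      (∀ v, G.degree v ≤ r) ∧
      (augAdj G).rank = (n + r) / (r + 1) ∧
      (1 : ℝ) - ((augAdj G).rank : ℝ) / n
        = 1 - (((n + r) / (r + 1) : ℕ) : ℝ) / n := by
  have h2k := two_mul_add_div_succ_le hn hr
  have : NeZero ((n + r) / (r + 1)) := ⟨(Nat.div_pos (by omega) (Nat.succ_pos r)).ne'⟩
  have hrank := rank_augAdj_clusterGraph_finOfNat (n := n) (k := (n + r) / (r + 1)) (by omega)
  exact ⟨_, fun v => degree_clusterGraph_finOfNat_pos h2k v,
    fun v => degree_clusterGraph_finOfNat_le (le_add_div_succ_mul n r) v, hrank, by rw [hrank]⟩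

open Classical in
/-- For every `n ≥ 2` and `2 ≤ r ≤ n - 1`, there exists a graph on `n` vertices without
isolated vertices, with maximum degree at most `r`, whose augmented adjacency matrix has
`𝔽₂`-rank exactly `⌈n / (r + 1)⌉` (written `(n + r) / (r + 1)` in natural division);
consequently the associated binary storage code has rate `1 - ⌈n / (r + 1)⌉ / n`. -/
theorem exists_graph_rank_augAdj_eq_ceil {n r : ℕ} (hn : 2 ≤ n) (hr : 2 ≤ r)
    (hrn : r ≤ n - 1) :
    ∃ G : SimpleGraph (Fin n),
      (∀ v, 0 < G.degree v) ∧
      (∀ v, G.degree v ≤ r) ∧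
      (augAdj G).rank = (n + r) / (r + 1) ∧
      (1 : ℝ) - ((augAdj G).rank : ℝ) / n
        = 1 - (((n + r) / (r + 1) : ℕ) : ℝ) / n :=
  exists_graph_rank_augAdj_eq_ceil_general hn hr
end

section
/- For every n ≥ 2 and every 2 ≤ r ≤ n − 1 there exists a connected simple graph G on n vertices in which every vertex has degree at most r, such that rank_{𝔽₂}(Ā(G)) ≤ 3·⌈n/(r+1)⌉; consequently the binary storage code of G with parity repair has rate at least 1 − (3/n)·⌈n/(r+1)⌉. -/
/-!
Cut `ℕ` into the intervals `[q (r + 1), q (r + 1) + r]`; `⌈n / (r + 1)⌉` of them meet `Fin n`.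
Make each interval a clique, delete the edge between its two ends and join consecutive intervals
by an edge between adjacent ends; the deleted edge leaves room for the joining edges, so the closed
neighbourhood of every vertex lies in a window of `r + 1` consecutive integers and all degrees are
at most `r`. The graph contains the path `0 - 1 - ⋯ - (n - 1)`, hence is connected. The column of
`Ā` at a vertex that is not an end of its interval is the indicator vector of that interval, so
the columns of `Ā` take at most three values per interval.
-/

open Finset

theorem Matrix.rank_le_card_image_of_factorsThrough {m n α K : Type*} [Fintype m] [Fintype n]
    [DecidableEq α] [Field K] (A : Matrix m n K) (κ : n → α)
    (h : Function.FactorsThrough A.col κ) : A.rank ≤ #(univ.image κ) := by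
  classical
  set F := Function.extend κ A.col 0
  have hrange : Set.range A.col = ((univ.image κ).image F : Finset (m → K)) := by
    ext c
    simp [F, h.extend_apply]
  rw [rank_eq_finrank_span_cols, hrange]
  exact (finrank_span_finset_le_card _).trans card_image_le

theorem Nat.div_succ_lt_add_div_succ {v n r : ℕ} (hv : v < n) : v / (r + 1) < (n + r) / (r + 1) :=
  calc v / (r + 1) < v / (r + 1) + 1 := Nat.lt_succ_self _
    _ = (v + (r + 1)) / (r + 1) := (Nat.add_div_right v (by omega : 0 < r + 1)).symm
    _ ≤ (n + r) / (r + 1) := Nat.div_le_div_right (by omega)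

theorem SimpleGraph.degree_comap_val_le_of_forall_adj_mem_Icc {H : SimpleGraph ℕ} {n r c : ℕ}
    {v : Fin n} [Fintype ((H.comap Fin.val).neighborSet v)] (hv : (v : ℕ) ∈ Icc c (c + r))
    (hadj : ∀ u, H.Adj v u → u ∈ Icc c (c + r)) : (H.comap Fin.val).degree v ≤ r := by
  rw [← card_neighborFinset_eq_degree]
  calc #((H.comap Fin.val).neighborFinset v) ≤ #((Icc c (c + r)).erase v) := by
        refine card_le_card_of_injOn Fin.val (fun u hu => ?_) Fin.val_injective.injOn
        rw [coe_neighborFinset, mem_neighborSet, comap_adj] at hu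
        exact mem_erase.2 ⟨hu.ne', hadj u hu⟩
    _ = r := by rw [card_erase_of_mem hv, Nat.card_Icc]; omega

def cliqueChain (r : ℕ) : SimpleGraph ℕ where
  Adj u v := u ≠ v ∧
    ((u / (r + 1) = v / (r + 1) ∧ u + r ≠ v ∧ v + r ≠ u) ∨ u + 1 = v ∨ v + 1 = u)
  symm := ⟨fun _ _ ⟨hne, h⟩ => ⟨hne.symm, by
    rcases h with ⟨hq, h₁, h₂⟩ | h | h
    exacts [.inl ⟨hq.symm, h₂, h₁⟩, .inr (.inr h), .inr (.inl h)]⟩⟩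
  loopless := ⟨fun _ h => h.1 rfl⟩

theorem cliqueChain_adj {r u v : ℕ} : (cliqueChain r).Adj u v ↔
    u ≠ v ∧
      ((u / (r + 1) = v / (r + 1) ∧ u + r ≠ v ∧ v + r ≠ u) ∨ u + 1 = v ∨ v + 1 = u) :=
  Iff.rfl

namespace cliqueChain

def endpointKind (r v : ℕ) : Option Bool :=
  if v % (r + 1) = 0 then some false else if v % (r + 1) = r then some true else none

variable {r : ℕ}

theorem adj_iff_of_endpointKind_eq_none {u v : ℕ} (hv : endpointKind r v = none) :
    (cliqueChain r).Adj u v ↔ u ≠ v ∧ u / (r + 1) = v / (r + 1) := by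
  obtain ⟨hp0, hpr⟩ : v % (r + 1) ≠ 0 ∧ v % (r + 1) ≠ r := by
    unfold endpointKind at hv; split_ifs at hv; exact ⟨‹_›, ‹_›⟩
  have hr1 : 0 < r + 1 := r.succ_pos
  have hvm := Nat.mod_lt v hr1
  have hvq := Nat.div_add_mod v (r + 1)
  have hu := Nat.div_add_mod u (r + 1)
  have hum := Nat.mod_lt u hr1
  rw [cliqueChain_adj]
  constructor
  · rintro ⟨hne, ⟨hq, -⟩ | h | h⟩
    · exact ⟨hne, hq⟩
    · exact ⟨hne, ((Nat.div_mod_unique (c := v % (r + 1) - 1) hr1).2 ⟨by omega, by omega⟩).1⟩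
    · exact ⟨hne, ((Nat.div_mod_unique (c := v % (r + 1) + 1) hr1).2 ⟨by omega, by omega⟩).1⟩
  · rintro ⟨hne, hq⟩
    rw [hq] at hu
    exact ⟨hne, .inl ⟨hq, by omega, by omega⟩⟩

theorem exists_neighborhood_subset_Icc (hr : 2 ≤ r) (v : ℕ) :
    ∃ c, v ∈ Icc c (c + r) ∧ ∀ u, (cliqueChain r).Adj v u → u ∈ Icc c (c + r) := by
  have hv := Nat.div_add_mod v (r + 1)
  have hp := Nat.mod_lt v (by omega : 0 < r + 1)
  -- at an end of its interval the window is shifted by one towards the neighbouring interval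
  refine ⟨if v % (r + 1) = 0 then v - 1 else if v % (r + 1) = r then v + 1 - r
    else v - v % (r + 1), ?_, ?_⟩
  · simp only [mem_Icc]; split_ifs <;> omega
  · simp only [cliqueChain_adj]
    rintro u ⟨-, ⟨hq, h1, h2⟩ | h | h⟩
    · have hu := Nat.div_add_mod u (r + 1)
      have hum := Nat.mod_lt u (by omega : 0 < r + 1)
      rw [← hq] at hu
      simp only [mem_Icc]; split_ifs <;> omega
    all_goals simp only [mem_Icc]; split_ifs <;> omega

theorem comap_val_connected {n : ℕ} (hn : 0 < n) :
    ((cliqueChain r).comap (Fin.val : Fin n → ℕ)).Connected := by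
  obtain ⟨k, rfl⟩ : ∃ k, n = k + 1 := ⟨n - 1, by omega⟩
  refine (SimpleGraph.pathGraph_connected k).mono fun u v huv => ?_
  rw [SimpleGraph.pathGraph_adj] at huv
  rw [SimpleGraph.comap_adj, cliqueChain_adj]
  exact ⟨by omega, .inr huv⟩

theorem comap_val_degree_le (hr : 2 ≤ r) {n : ℕ} (v : Fin n)
    [Fintype (((cliqueChain r).comap Fin.val).neighborSet v)] :
    ((cliqueChain r).comap Fin.val).degree v ≤ r :=
  have ⟨_, hv, hadj⟩ := exists_neighborhood_subset_Icc hr v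
  SimpleGraph.degree_comap_val_le_of_forall_adj_mem_Icc hv hadj

theorem col_augAdj_comap_val {n : ℕ} {v : Fin n} (hv : endpointKind r v = none) :
    (augAdj ((cliqueChain r).comap Fin.val)).col v =
      fun u : Fin n => if (u : ℕ) / (r + 1) = (v : ℕ) / (r + 1) then 1 else 0 := by
  ext u
  simp only [Matrix.col_apply, augAdj, SimpleGraph.comap_adj, adj_iff_of_endpointKind_eq_none hv]
  refine if_congr ?_ rfl rfl
  rw [Fin.ext_iff]
  tauto

theorem eq_of_endpointKind_eq {u v : ℕ} (hq : u / (r + 1) = v / (r + 1))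
    (hk : endpointKind r u = endpointKind r v) (hv : endpointKind r v ≠ none) : u = v := by
  have hmod : u % (r + 1) = v % (r + 1) := by
    unfold endpointKind at hk hv
    split_ifs at hk hv <;> simp_all
  rw [← Nat.div_add_mod u (r + 1), ← Nat.div_add_mod v (r + 1), hq, hmod]

theorem rank_augAdj_comap_val_le (n : ℕ) :
    (augAdj ((cliqueChain r).comap (Fin.val : Fin n → ℕ))).rank ≤
      3 * ((n + r) / (r + 1)) := by
  set κ : Fin n → ℕ × Option Bool := fun v => ((v : ℕ) / (r + 1), endpointKind r v)
  have hκ : Function.FactorsThrough (augAdj ((cliqueChain r).comap Fin.val)).col κ := by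
    intro u v huv
    obtain ⟨hq, hk⟩ : (u : ℕ) / (r + 1) = v / (r + 1) ∧
        endpointKind r u = endpointKind r v := Prod.ext_iff.1 huv
    by_cases hv : endpointKind r v = none
    · rw [col_augAdj_comap_val hv, col_augAdj_comap_val (hk.trans hv), hq]
    · rw [Fin.ext (eq_of_endpointKind_eq hq hk hv)]
  calc _ ≤ #(univ.image κ) := Matrix.rank_le_card_image_of_factorsThrough _ κ hκ
    _ ≤ #(range ((n + r) / (r + 1)) ×ˢ (univ : Finset (Option Bool))) :=
        card_le_card <| image_subset_iff.2 fun v _ =>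
          mem_product.2 ⟨mem_range.2 (Nat.div_succ_lt_add_div_succ v.isLt), mem_univ _⟩
    _ = 3 * ((n + r) / (r + 1)) := by simp [mul_comm]

end cliqueChain

open Classical in
theorem exists_connected_graph_rank_augAdj_le_general {n r : ℕ} (hn : 2 ≤ n) (hr : 2 ≤ r) :
    ∃ G : SimpleGraph (Fin n),
      G.Connected ∧
      (∀ v, G.degree v ≤ r) ∧
      (augAdj G).rank ≤ 3 * ((n + r) / (r + 1)) ∧
      (1 : ℝ) - ((augAdj G).rank : ℝ) / n
        ≥ 1 - 3 * (((n + r) / (r + 1) : ℕ) : ℝ) / n := by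
  have hrank := cliqueChain.rank_augAdj_comap_val_le (r := r) n
  refine ⟨_, cliqueChain.comap_val_connected (by omega),
    fun v => cliqueChain.comap_val_degree_le hr v, hrank, ?_⟩
  have hrank_real : ((augAdj ((cliqueChain r).comap (Fin.val : Fin n → ℕ))).rank : ℝ) ≤
      3 * (((n + r) / (r + 1) : ℕ) : ℝ) := by exact_mod_cast hrank
  gcongr

open Classical in
/-- For every `n ≥ 2` and `2 ≤ r ≤ n - 1`, there exists a connected graph on `n` vertices
with maximum degree at most `r` whose augmented adjacency matrix has `𝔽₂`-rank at most
`3 ⌈n / (r + 1)⌉` (the ceiling written `(n + r) / (r + 1)` in natural division);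
consequently its binary storage code has rate at least `1 - 3 ⌈n / (r + 1)⌉ / n`. -/
theorem exists_connected_graph_rank_augAdj_le {n r : ℕ} (hn : 2 ≤ n) (hr : 2 ≤ r)
    (hrn : r ≤ n - 1) :
    ∃ G : SimpleGraph (Fin n),
      G.Connected ∧
      (∀ v, G.degree v ≤ r) ∧
      (augAdj G).rank ≤ 3 * ((n + r) / (r + 1)) ∧
      (1 : ℝ) - ((augAdj G).rank : ℝ) / n
        ≥ 1 - 3 * (((n + r) / (r + 1) : ℕ) : ℝ) / n :=
  exists_connected_graph_rank_augAdj_le_general hn hr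
end

section
/- Let r : ℕ → ℕ be a sequence with r(n) ≥ 2 for all n. If r(n) → ∞ as n → ∞, then for every n ≥ 2 there exists a simple graph G_n on n vertices with no isolated vertices and maximum degree at most r(n), such that rank_{𝔽₂}(Ā(G_n))/n → 0 as n → ∞; equivalently, the rates of the binary storage codes of the G_n tend to 1. -/
/-!
Take for `G n` a disjoint union of cliques of sizes between `m` and `2m - 1`, where
`m = min (⌊r n / 2⌋ + 1) n ≥ 2`; every degree then lies in `[1, 2m - 2] ⊆ [1, r n]`. Writing
`B` for the `𝔽₂`-incidence matrix of vertices versus cliques, `Ā(G n) = B Bᵀ`, so the rank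
is at most the number `n / m` of cliques, and `m → ∞` because `r n → ∞`.
-/

open Finset Filter Topology

def SimpleGraph.fiberGraph {V ι : Type*} (f : V → ι) : SimpleGraph V where
  Adj u v := u ≠ v ∧ f u = f v
  symm := ⟨fun _ _ h => ⟨h.1.symm, h.2.symm⟩⟩
  loopless := ⟨fun _ h => h.1 rfl⟩

namespace SimpleGraph

variable {V ι : Type*} [Fintype V] [DecidableEq ι] (f : V → ι)
  [DecidableRel (fiberGraph f).Adj]

theorem neighborFinset_fiberGraph [DecidableEq V] (v : V) :
    (fiberGraph f).neighborFinset v = ({u | f u = f v} : Finset V).erase v := by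
  ext u
  rw [mem_neighborFinset, mem_erase, mem_filter]
  simp [fiberGraph, eq_comm]

theorem degree_fiberGraph (v : V) : (fiberGraph f).degree v = #{u | f u = f v} - 1 := by
  classical
  rw [← card_neighborFinset_eq_degree, neighborFinset_fiberGraph,
    card_erase_of_mem (by simp)]

end SimpleGraph

open SimpleGraph

theorem augAdj_fiberGraph_apply {n : ℕ} {ι : Type*} [DecidableEq ι] (f : Fin n → ι)
    (u v : Fin n) :
    augAdj (fiberGraph f) u v = if f u = f v then 1 else 0 := by
  by_cases huv : u = v
  · simp [augAdj, huv]
  · simp [augAdj, fiberGraph, huv]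

theorem rank_augAdj_fiberGraph_le {n : ℕ} {ι : Type*} (f : Fin n → ι)
    (s : Finset ι) (hf : ∀ u, f u ∈ s) : (augAdj (fiberGraph f)).rank ≤ #s := by
  classical
  let B : Matrix (Fin n) s (ZMod 2) := Matrix.of fun u i => if f u = i then 1 else 0
  have hB : augAdj (fiberGraph f) = B * B.transpose := by
    ext u v
    rw [augAdj_fiberGraph_apply, Matrix.mul_apply, Finset.sum_eq_single ⟨f u, hf u⟩]
    · simp [B, eq_comm]
    · intro i _ hi
      simp [B, show f u ≠ i from fun h => hi (Subtype.ext h.symm)]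
    · simp
  calc (augAdj (fiberGraph f)).rank ≤ B.rank := hB ▸ Matrix.rank_mul_le_left _ _
    _ ≤ #s := by simpa using Matrix.rank_le_card_width B

/-- Consecutive blocks of length `m`; the `min` merges the short remainder into the last
block. -/
def blockIndex (m n : ℕ) (u : Fin n) : ℕ := min (u / m) (n / m - 1)

section blockIndex

variable {m n : ℕ}

theorem blockIndex_lt (hm : 0 < m) (hmn : m ≤ n) (u : Fin n) : blockIndex m n u < n / m := by
  have : 0 < n / m := Nat.div_pos hmn hm
  unfold blockIndex
  omega

theorem blockIndex_eq_of_mem_Ico {j : ℕ} (hj : j < n / m) (u : Fin n)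
    (hu : u.val ∈ Ico (j * m) (j * m + m)) : blockIndex m n u = j := by
  rw [mem_Ico, ← add_one_mul] at hu
  have : u / m = j := Nat.div_eq_of_lt_le hu.1 hu.2
  unfold blockIndex
  omega

theorem mem_Ico_of_blockIndex_eq (hm : 0 < m) (u : Fin n) :
    u.val ∈ Ico (blockIndex m n u * m) (blockIndex m n u * m + 2 * m - 1) := by
  have hu : u / m * m ≤ u ∧ u.val < u / m * m + m :=
    ⟨Nat.div_mul_le_self _ _, Nat.lt_div_mul_add hm⟩
  have hn : n / m * m ≤ n ∧ n < n / m * m + m :=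
    ⟨Nat.div_mul_le_self _ _, Nat.lt_div_mul_add hm⟩
  rw [mem_Ico]
  rcases le_total (u / m) (n / m - 1) with h | h
  · rw [blockIndex, min_eq_left h]
    omega
  · have hkm := Nat.mul_le_mul_right m h
    rw [blockIndex, min_eq_right h]
    rw [Nat.sub_one_mul] at hkm ⊢
    omega

theorem le_card_filter_blockIndex_eq (hm : 0 < m) {j : ℕ} (hj : j < n / m) :
    m ≤ #{u : Fin n | blockIndex m n u = j} := by
  have hjn : j * m + m ≤ n := by
    rw [← add_one_mul]
    exact (Nat.le_div_iff_mul_le hm).1 hj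
  rw [← card_map Fin.valEmbedding]
  calc m = #(Ico (j * m) (j * m + m)) := by simp
    _ ≤ _ := card_le_card fun x hx => by
      have hxn : x < n := by rw [mem_Ico] at hx; omega
      simpa using ⟨⟨x, hxn⟩, blockIndex_eq_of_mem_Ico hj ⟨x, hxn⟩ hx, rfl⟩

theorem card_filter_blockIndex_eq_lt (hm : 0 < m) (j : ℕ) :
    #{u : Fin n | blockIndex m n u = j} < 2 * m := by
  rw [← card_map Fin.valEmbedding]
  calc _ ≤ #(Ico (j * m) (j * m + 2 * m - 1)) := card_le_card fun x hx => by
        obtain ⟨u, hu, rfl⟩ := mem_map.1 hx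
        rw [mem_filter] at hu
        simpa [hu.2] using mem_Ico_of_blockIndex_eq hm u
    _ < 2 * m := by simp; omega

end blockIndex

theorem degree_fiberGraph_blockIndex {m n : ℕ} (hm : 0 < m) (hmn : m ≤ n)
    [DecidableRel (fiberGraph (blockIndex m n)).Adj] (v : Fin n) :
    m - 1 ≤ (fiberGraph (blockIndex m n)).degree v ∧
      (fiberGraph (blockIndex m n)).degree v ≤ 2 * m - 2 := by
  have hlower := le_card_filter_blockIndex_eq (n := n) hm (blockIndex_lt hm hmn v)
  have hupper := card_filter_blockIndex_eq_lt (n := n) hm (blockIndex m n v)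
  rw [degree_fiberGraph]
  omega

theorem rank_augAdj_fiberGraph_blockIndex_div_le {m n : ℕ} (hm : 0 < m) (hmn : m ≤ n) :
    ((augAdj (fiberGraph (blockIndex m n))).rank : ℝ) / n ≤ 1 / m := by
  have hrank : (augAdj (fiberGraph (blockIndex m n))).rank * m ≤ n :=
    calc _ ≤ n / m * m := by
          gcongr
          simpa using rank_augAdj_fiberGraph_le _ (range (n / m))
            (by simpa using blockIndex_lt hm hmn)
      _ ≤ n := Nat.div_mul_le_self n m
  have hn : (0 : ℝ) < n := by exact_mod_cast hm.trans_le hmn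
  rw [div_le_div_iff₀ hn (by positivity), one_mul]
  exact_mod_cast hrank

open Classical in
/-- If `r n ≥ 2` for all `n` and `r n → ∞`, then there is a sequence of graphs `G n` on
`n` vertices (for every `n ≥ 2` having no isolated vertices and maximum degree at most
`r n`) such that `rank(Ā(G n)) / n → 0`; equivalently, the rates
`1 - rank(Ā(G n)) / n` of the binary storage codes tend to `1`. -/
theorem exists_graph_seq_rate_tendsto_one (r : ℕ → ℕ) (hr : ∀ n, 2 ≤ r n)
    (hr' : Filter.Tendsto r Filter.atTop Filter.atTop) :
    ∃ G : (n : ℕ) → SimpleGraph (Fin n),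
      (∀ n, 2 ≤ n → (∀ v, 0 < (G n).degree v) ∧ (∀ v, (G n).degree v ≤ r n)) ∧
      Filter.Tendsto (fun n => ((augAdj (G n)).rank : ℝ) / n)
        Filter.atTop (nhds 0) ∧
      Filter.Tendsto (fun n => (1 : ℝ) - ((augAdj (G n)).rank : ℝ) / n)
        Filter.atTop (nhds 1) := by
  let m : ℕ → ℕ := fun n => min (r n / 2 + 1) n
  have hm : ∀ n, 2 ≤ n → 2 ≤ m n ∧ m n ≤ n ∧ 2 * m n - 2 ≤ r n := fun n hn => by
    have := hr n
    simp only [m]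
    omega
  have hm_tendsto : Tendsto m atTop atTop := tendsto_atTop.2 fun K =>
    ((hr'.eventually_ge_atTop (2 * K)).and (eventually_ge_atTop K)).mono fun n hn => by
      simp only [m]
      omega
  have hrate : Tendsto (fun n => ((augAdj (fiberGraph (blockIndex (m n) n))).rank : ℝ) / n)
      atTop (𝓝 0) := by
    refine squeeze_zero' (.of_forall fun n => by positivity) ?_
      (tendsto_one_div_atTop_nhds_zero_nat.comp hm_tendsto)
    filter_upwards [eventually_ge_atTop 2] with n hn
    obtain ⟨hm2, hmn, -⟩ := hm n hn
    exact rank_augAdj_fiberGraph_blockIndex_div_le (by omega) hmn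
  refine ⟨fun n => fiberGraph (blockIndex (m n) n), fun n hn => ?_, hrate,
    by simpa using tendsto_const_nhds.sub hrate⟩
  obtain ⟨hm2, hmn, hmr⟩ := hm n hn
  have hdeg := degree_fiberGraph_blockIndex (by omega) hmn
  exact ⟨fun v => (Nat.sub_pos_of_lt hm2).trans_le (hdeg v).1, fun v => (hdeg v).2.trans hmr⟩
end

section
/- Let r ≥ 2 be a fixed natural number. For every n ≥ 2 and every simple graph G on n vertices with maximum degree at most r, the rate of its binary storage code satisfies 1 − rank_{𝔽₂}(Ā(G))/n ≤ 1 − (1/n)·⌊n/(r+1)⌋ ≤ 1 − 1/(r+1) + 1/n. In particular, for any sequence of graphs G_n on n vertices with maximum degree at most r, the rates of the binary storage codes of the G_n do not converge to 1: their limsup is at most 1 − 1/(r+1) < 1. -/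
/-!
Every column of `Ā(G)` is supported on a closed neighbourhood, hence on at most `r + 1`
coordinates, and every coordinate `u` is hit by some column (the diagonal entry is `1`).
A basis of the column space chosen among the columns must therefore still cover all `n`
coordinates, so `n ≤ rank Ā(G) · (r + 1)`. The rest is arithmetic with `⌊n/(r+1)⌋`, and the
limsup bound follows from the rate being at most `1 - 1/(r+1) + 1/n`.
-/

open Finset Filter Module Submodule

theorem card_le_finrank_span_mul {K m : Type*} [Field K] [DecidableEq K] [Fintype m]
    {s : Set (m → K)} {k : ℕ} (hsupp : ∀ v ∈ s, #{i | v i ≠ 0} ≤ k)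
    (hcover : ∀ i, ∃ v ∈ s, v i ≠ 0) :
    Fintype.card m ≤ finrank K (span K s) * k := by
  classical
  obtain ⟨b, hbs, hspan, hli⟩ := exists_linearIndependent K s
  obtain ⟨B, rfl⟩ := hli.setFinite.exists_finset_coe
  have hbcover : ∀ i, ∃ w ∈ B, w i ≠ 0 := by
    intro i
    by_contra! hzero
    obtain ⟨v, hv, hvi⟩ := hcover i
    have hker : span K s ≤ LinearMap.ker (LinearMap.proj i) := by
      rw [← hspan, span_le]
      exact hzero
    exact hvi (hker (subset_span hv))
  calc Fintype.card m = #(univ : Finset m) := rfl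
    _ ≤ #(B.biUnion fun w => {i | w i ≠ 0}) :=
        card_le_card fun i _ => by simpa using hbcover i
    _ ≤ #B * k :=
        card_biUnion_le_card_mul _ _ _ fun w hw => hsupp w (hbs hw)
    _ = finrank K (span K s) * k := by
        rw [← hspan, finrank_span_finset_eq_card hli]

theorem Matrix.card_le_rank_mul {K m n : Type*} [Field K] [DecidableEq K] [Fintype m]
    [Fintype n] (M : Matrix m n K) {k : ℕ} (hcol : ∀ j, #{i | M i j ≠ 0} ≤ k)
    (hrow : ∀ i, ∃ j, M i j ≠ 0) :
    Fintype.card m ≤ M.rank * k := by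
  rw [M.rank_eq_finrank_span_cols]
  refine card_le_finrank_span_mul ?_ fun i => ?_
  · rintro _ ⟨j, rfl⟩
    exact hcol j
  · obtain ⟨j, hj⟩ := hrow i
    exact ⟨M.col j, Set.mem_range_self j, hj⟩

section AugmentedAdjacency

variable {n : ℕ} (G : SimpleGraph (Fin n))

theorem augAdj_ne_zero_iff {u v : Fin n} : augAdj G u v ≠ 0 ↔ u = v ∨ G.Adj u v := by
  simp [augAdj, or_iff_not_imp_left]

theorem card_support_augAdj_col_le [DecidableRel G.Adj] (v : Fin n) :
    #{u | augAdj G u v ≠ 0} ≤ G.degree v + 1 := by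
  have hsupp : ({u | augAdj G u v ≠ 0} : Finset (Fin n)) = insert v (G.neighborFinset v) := by
    ext u
    simp [augAdj_ne_zero_iff, G.adj_comm v]
  rw [hsupp, ← G.card_neighborFinset_eq_degree]
  exact card_insert_le _ _

theorem le_rank_augAdj_mul [DecidableRel G.Adj] {r : ℕ} (hdeg : ∀ v, G.degree v ≤ r) :
    n ≤ (augAdj G).rank * (r + 1) := by
  simpa using (augAdj G).card_le_rank_mul
    (fun v => (card_support_augAdj_col_le G v).trans (Nat.succ_le_succ (hdeg v)))
    (fun u => ⟨u, (augAdj_ne_zero_iff G).2 (Or.inl rfl)⟩)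

theorem rate_augAdj_nonneg : 0 ≤ 1 - ((augAdj G).rank : ℝ) / n :=
  sub_nonneg.2 <| div_le_one_of_le₀ (by exact_mod_cast (augAdj G).rank_le_width) n.cast_nonneg

theorem rate_augAdj_le [DecidableRel G.Adj] {r : ℕ} (hdeg : ∀ v, G.degree v ≤ r) :
    1 - ((augAdj G).rank : ℝ) / n ≤ 1 - ((n / (r + 1) : ℕ) : ℝ) / n := by
  have hrank : n / (r + 1) ≤ (augAdj G).rank :=
    Nat.div_le_of_le_mul <| (le_rank_augAdj_mul G hdeg).trans_eq (mul_comm _ _)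
  gcongr

end AugmentedAdjacency

theorem one_sub_cast_nat_div_div_le {n d : ℕ} (hn : 0 < n) :
    (1 : ℝ) - ((n / d : ℕ) : ℝ) / n ≤ 1 - 1 / (d : ℝ) + 1 / n := by
  have hfloor : (n : ℝ) / d < ((n / d : ℕ) : ℝ) + 1 := by
    rw [← Nat.floor_div_eq_div (K := ℝ)]
    exact Nat.lt_floor_add_one _
  have key : ((n : ℝ) / d - 1) / n ≤ ((n / d : ℕ) : ℝ) / n := by
    gcongr
    linarith
  rw [sub_div, div_right_comm, div_self (by positivity)] at key
  linarith

theorem limsup_le_of_le_add_one_div {f : ℕ → ℝ} {a L : ℝ} (hbdd : ∀ n, a ≤ f n)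
    (hle : ∀ᶠ n in atTop, f n ≤ L + 1 / n) :
    limsup f atTop ≤ L := by
  have hlim : Tendsto (fun n : ℕ => L + 1 / (n : ℝ)) atTop (nhds L) := by
    simpa using tendsto_one_div_atTop_nhds_zero_nat.const_add L
  calc limsup f atTop ≤ limsup (fun n : ℕ => L + 1 / (n : ℝ)) atTop :=
        limsup_le_limsup hle (isCoboundedUnder_le_of_le _ hbdd)
          hlim.isBoundedUnder_le
    _ = L := hlim.limsup_eq

open Classical in
theorem rate_bounded_away_from_one_of_constant_locality_general {r : ℕ} :
    (∀ n : ℕ, 2 ≤ n → ∀ G : SimpleGraph (Fin n), (∀ v, G.degree v ≤ r) →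
      (1 : ℝ) - ((augAdj G).rank : ℝ) / n ≤ 1 - ((n / (r + 1) : ℕ) : ℝ) / n ∧
      (1 : ℝ) - ((n / (r + 1) : ℕ) : ℝ) / n ≤ 1 - 1 / ((r : ℝ) + 1) + 1 / n) ∧
    (∀ G : (n : ℕ) → SimpleGraph (Fin n), (∀ n, ∀ v, (G n).degree v ≤ r) →
      Filter.limsup (fun n => (1 : ℝ) - ((augAdj (G n)).rank : ℝ) / n) Filter.atTop
        ≤ 1 - 1 / ((r : ℝ) + 1)) ∧
    (1 : ℝ) - 1 / ((r : ℝ) + 1) < 1 := by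
  have floor_bound : ∀ n, 0 < n →
      (1 : ℝ) - ((n / (r + 1) : ℕ) : ℝ) / n ≤ 1 - 1 / ((r : ℝ) + 1) + 1 / n :=
    fun n hn => by exact_mod_cast one_sub_cast_nat_div_div_le (d := r + 1) hn
  refine ⟨fun n hn G hdeg => ⟨rate_augAdj_le G hdeg, floor_bound n (by omega)⟩,
    fun G hdeg => ?_, sub_lt_self _ (by positivity)⟩
  refine limsup_le_of_le_add_one_div (fun n => rate_augAdj_nonneg (G n)) ?_
  filter_upwards [Filter.eventually_gt_atTop 0] with n hn
  exact (rate_augAdj_le (G n) (hdeg n)).trans (floor_bound n hn)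

open Classical in
/-- For a fixed locality `r ≥ 2`: every graph on `n ≥ 2` vertices with maximum degree at
most `r` has storage-code rate at most `1 - ⌊n/(r+1)⌋/n ≤ 1 - 1/(r+1) + 1/n`; and for
any sequence of such graphs the limsup of the rates is at most `1 - 1/(r+1) < 1`. -/
theorem rate_bounded_away_from_one_of_constant_locality {r : ℕ} (hr : 2 ≤ r) :
    (∀ n : ℕ, 2 ≤ n → ∀ G : SimpleGraph (Fin n), (∀ v, G.degree v ≤ r) →
      (1 : ℝ) - ((augAdj G).rank : ℝ) / n ≤ 1 - ((n / (r + 1) : ℕ) : ℝ) / n ∧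
      (1 : ℝ) - ((n / (r + 1) : ℕ) : ℝ) / n ≤ 1 - 1 / ((r : ℝ) + 1) + 1 / n) ∧
    (∀ G : (n : ℕ) → SimpleGraph (Fin n), (∀ n, ∀ v, (G n).degree v ≤ r) →
      Filter.limsup (fun n => (1 : ℝ) - ((augAdj (G n)).rank : ℝ) / n) Filter.atTop
        ≤ 1 - 1 / ((r : ℝ) + 1)) ∧
    (1 : ℝ) - 1 / ((r : ℝ) + 1) < 1 :=
  rate_bounded_away_from_one_of_constant_locality_general
end
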